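/- For n ≥ 2, the generating polynomial R_n(x) = Σ_k R(n,k)x^k of alternating runs satisfies R_n(x) = ((x+1)/2)^{n-1} · ((x-1)/(x+1))^{(n+1)/2} · P_n(√((x+1)/(x-1))) for all real x > 1, where P_n is the derivative polynomial for tangent. -/

import Mathlib

/-!
Inserting the maximum into the `n + 1` slots of a permutation of `n ≥ 2` letters with `r`
alternating runs yields `r` permutations with `r` runs, `2` with `r + 1` runs and `n - 1 - r`
with `r + 2` runs: in the up-down word of the permutation the insertion replaces one letter by
an ascent followed by a descent, or adds a letter at one end. Hence
`R_{n+1}(x) = x (2 + (n - 1) x) R_n(x) + x (1 - x²) R_n'(x)`.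

With `t = √((x + 1) / (x - 1))` one has `((x - 1) / (x + 1))^((n + 1) / 2) = t^-(n+1)`, and the
identity `R_n(x) t^(n+1) = ((x + 1) / 2)^(n-1) P_n(t)` on `x > 1` follows by induction from
`R_2(x) = 2x`: differentiating it in `x`, where `dt/dx = -1 / (t (x - 1)²)`, and using the
recurrence gives it for `n + 1`, because `P_{n+1} = (1 + t²) P_n'`.
-/

open Polynomial Finset

/-- Derivative polynomials for tangent: `P 0 = X`, `P (n+1) = (1+X^2) * (P n)'`. -/
noncomputable def P : ℕ → Polynomial ℝ
  | 0 => Polynomial.X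
  | n + 1 => (1 + Polynomial.X ^ 2) * (P n).derivative

/-- The values of a permutation of `Fin n`, as a function `ℕ → ℕ` (junk value `0` off-range). -/
def permVal {n : ℕ} (π : Equiv.Perm (Fin n)) : ℕ → ℕ :=
  fun j => if h : j < n then (π ⟨j, h⟩ : ℕ) else 0

/-- The number of alternating runs of a permutation of `{1,…,n}` (0-indexed positions):
one more than the number of interior positions where the permutation changes direction.
By convention this is `0` when `n ≤ 1`. -/
def runs (n : ℕ) (π : Equiv.Perm (Fin n)) : ℕ :=
  if n ≤ 1 then 0 else
    1 + ((Finset.Ico 1 (n - 1)).filter (fun i =>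
      (permVal π (i - 1) < permVal π i ∧ permVal π (i + 1) < permVal π i) ∨
      (permVal π i < permVal π (i - 1) ∧ permVal π i < permVal π (i + 1)))).card

/-- `R n k`: the number of permutations of `{1,…,n}` with exactly `k` alternating runs. -/
def R (n k : ℕ) : ℕ :=
  (Finset.univ.filter (fun π : Equiv.Perm (Fin n) => runs n π = k)).card

/-- The generating polynomial `R_n(x) = ∑_k R(n,k) x^k`. -/
noncomputable def Rpoly (n : ℕ) : Polynomial ℝ :=
  ∑ k ∈ Finset.range n, Polynomial.C ((R n k : ℝ)) * Polynomial.X ^ k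

/-- Stirling numbers of the second kind. -/
def stirling2 : ℕ → ℕ → ℕ
  | 0, 0 => 1
  | 0, _ + 1 => 0
  | _ + 1, 0 => 0
  | n + 1, k + 1 => (k + 1) * stirling2 n (k + 1) + stirling2 n k

/-- The number of descents of a permutation of `Fin n`. -/
def des (n : ℕ) (π : Equiv.Perm (Fin n)) : ℕ :=
  ((Finset.range (n - 1)).filter (fun i => permVal π (i + 1) < permVal π i)).card


def ascentWord (n : ℕ) (π : Equiv.Perm (Fin n)) : List Bool :=
  (List.range (n - 1)).map fun i => decide (permVal π i < permVal π (i + 1))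

lemma length_ascentWord (n : ℕ) (π : Equiv.Perm (Fin n)) : (ascentWord n π).length = n - 1 := by
  simp [ascentWord]

lemma getElem_ascentWord (n : ℕ) (π : Equiv.Perm (Fin n)) {i : ℕ} (hi : i < n - 1) :
    (ascentWord n π)[i]'(by rwa [length_ascentWord]) =
      decide (permVal π i < permVal π (i + 1)) := by
  simp [ascentWord]

lemma permVal_lt {n : ℕ} (π : Equiv.Perm (Fin n)) {i : ℕ} (hi : i < n) : permVal π i < n := by
  simp [permVal, hi]

lemma permVal_inj {n : ℕ} (π : Equiv.Perm (Fin n)) {i j : ℕ} (hi : i < n) (hj : j < n) :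
    permVal π i = permVal π j ↔ i = j := by
  simp [permVal, hi, hj, ← Fin.ext_iff]

def turns : List Bool → ℕ
  | [] => 0
  | [_] => 0
  | a :: b :: l => (if a = b then 0 else 1) + turns (b :: l)

lemma turns_map_range (f : ℕ → Bool) (m : ℕ) :
    turns ((List.range (m + 1)).map f) = #{i ∈ range m | f i ≠ f (i + 1)} := by
  induction m generalizing f with
  | zero => rfl
  | succ m ih =>
    have hcons : ∀ k (g : ℕ → Bool), (List.range (k + 1)).map g
        = g 0 :: (List.range k).map fun i => g (i + 1) := fun k g => by
      rw [List.range_succ_eq_map, List.map_cons, List.map_map]; rfl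
    calc turns ((List.range (m + 2)).map f)
        = (if f 0 = f 1 then 0 else 1) + turns ((List.range (m + 1)).map fun i => f (i + 1)) := by
          simp only [hcons]; rfl
      _ = _ := by rw [ih, card_filter, card_filter, sum_range_succ' _ m]; simp [add_comm]

lemma runs_eq_one_add_turns {n : ℕ} (hn : 2 ≤ n) (π : Equiv.Perm (Fin n)) :
    runs n π = 1 + turns (ascentWord n π) := by
  obtain ⟨m, rfl⟩ : ∃ m, n = m + 2 := ⟨n - 2, by omega⟩
  rw [runs, if_neg (by omega), ascentWord, show m + 2 - 1 = m + 1 by omega, turns_map_range,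
    card_filter, card_filter, sum_Ico_eq_sum_range, Nat.add_sub_cancel]
  refine congrArg _ (sum_congr rfl fun i hi => ?_)
  rw [mem_range] at hi
  have h₁ : permVal π i ≠ permVal π (i + 1) :=
    (permVal_inj π (by omega) (by omega)).not.mpr (by omega)
  have h₂ : permVal π (i + 1) ≠ permVal π (i + 1 + 1) :=
    (permVal_inj π (by omega) (by omega)).not.mpr (by omega)
  simp only [add_comm 1 i, Nat.add_sub_cancel, ne_eq, decide_eq_decide]
  congr 1
  apply propext
  omega

/-- The up-down word of a permutation after its maximum is inserted right after position `q`: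
the letter comparing positions `q` and `q + 1` becomes an ascent followed by a descent
(past the end, an ascent is appended). -/
def insertPeak : List Bool → ℕ → List Bool
  | [], _ => [true]
  | _ :: B, 0 => true :: false :: B
  | a :: B, q + 1 => a :: insertPeak B q

def insertMaxWord (A : List Bool) : ℕ → List Bool
  | 0 => false :: A
  | q + 1 => insertPeak A q

lemma length_insertPeak (A : List Bool) (q : ℕ) : (insertPeak A q).length = A.length + 1 := by
  induction A generalizing q with
  | nil => rfl
  | cons a B ih => cases q <;> simp [insertPeak, ih]

lemma length_insertMaxWord (A : List Bool) (p : ℕ) :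
    (insertMaxWord A p).length = A.length + 1 := by
  cases p <;> simp [insertMaxWord, length_insertPeak]

lemma getElem_insertPeak (A : List Bool) {q i : ℕ} (hq : q ≤ A.length)
    (hi : i < A.length + 1) :
    (insertPeak A q)[i]'(by rwa [length_insertPeak]) =
      if hlt : i < q then A[i]
      else if heq : i = q then true
      else if i = q + 1 then false
      else A[i - 1]'(by omega) := by
  induction A generalizing q i with
  | nil =>
    obtain rfl : q = 0 := by simpa using hq
    obtain rfl : i = 0 := by simpa using hi
    rfl
  | cons a B ih =>
    rcases q with _ | q
    · rcases i with _ | _ | i <;> simp [insertPeak]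
    · rcases i with _ | i
      · simp [insertPeak]
      · simp only [insertPeak, List.getElem_cons_succ]
        rw [ih (by simpa using hq) (by simpa using hi)]
        rcases i with _ | i <;> split_ifs <;> first | rfl | omega

lemma getElem_insertMaxWord (A : List Bool) {p i : ℕ} (hp : p ≤ A.length + 1)
    (hi : i < A.length + 1) :
    (insertMaxWord A p)[i]'(by rwa [length_insertMaxWord]) =
      if hlt : i + 1 < p then A[i]
      else if hpred : i + 1 = p then true
      else if heq : i = p then false
      else A[i - 1]'(by omega) := by
  rcases p with _ | q
  · rcases i with _ | i <;> simp [insertMaxWord]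
  · simp only [insertMaxWord, getElem_insertPeak A (by omega : q ≤ A.length) hi]
    simp only [Nat.add_lt_add_iff_right, Nat.add_right_cancel_iff]
    split_ifs <;> rfl

lemma sum_pow_turns_insertPeak {R : Type*} [CommRing R] (x : R) (a : Bool) (B : List Bool) :
    ∑ q ∈ range (B.length + 2), x ^ turns (insertPeak (a :: B) q) =
      (turns (a :: B) + a.toNat : R) * x ^ turns (a :: B)
        + (2 - a.toNat : R) * x ^ (turns (a :: B) + 1)
        + (B.length - turns (a :: B) : R) * x ^ (turns (a :: B) + 2) := by
  induction B generalizing a with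
  | nil => cases a <;> simp [sum_range_succ, insertPeak, turns] <;> ring
  | cons b C ih =>
    have hshift : ∀ q, x ^ turns (insertPeak (a :: b :: C) (q + 2))
        = x ^ (if a = b then 0 else 1) * x ^ turns (insertPeak (b :: C) (q + 1)) := fun q => by
      rw [← pow_add]; rfl
    have hb := ih b
    rw [sum_range_succ'] at hb
    rw [List.length_cons, sum_range_succ', sum_range_succ', sum_congr rfl fun q _ => hshift q,
      ← mul_sum, eq_sub_of_add_eq hb]
    rcases C with _ | ⟨c, D⟩
    · cases a <;> cases b <;> simp [insertPeak, turns] <;> ring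
    · cases a <;> cases b <;> cases c <;> simp [insertPeak, turns] <;> ring

lemma sum_pow_turns_insertMaxWord {R : Type*} [CommRing R] (x : R) (a : Bool) (B : List Bool) :
    ∑ p ∈ range (B.length + 3), x ^ turns (insertMaxWord (a :: B) p) =
      (turns (a :: B) + 1 : R) * x ^ turns (a :: B) + 2 * x ^ (turns (a :: B) + 1)
        + (B.length - turns (a :: B) : R) * x ^ (turns (a :: B) + 2) := by
  rw [sum_range_succ']
  simp only [insertMaxWord]
  rw [sum_pow_turns_insertPeak]
  cases a <;> simp [turns] <;> ring

noncomputable def insertMax {n : ℕ} (σ : Equiv.Perm (Fin n)) (p : Fin (n + 1)) :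
    Equiv.Perm (Fin (n + 1)) :=
  Equiv.ofBijective (Fin.insertNth p (Fin.last n) fun j => (σ j).castSucc) <| by
    refine Finite.injective_iff_bijective.mp fun i j hij => ?_
    induction i using p.succAboveCases <;> induction j using p.succAboveCases <;>
      simp_all [Fin.castSucc_ne_last, (Fin.castSucc_ne_last _).symm]

lemma insertMax_apply_self {n : ℕ} (σ : Equiv.Perm (Fin n)) (p : Fin (n + 1)) :
    insertMax σ p p = Fin.last n := by
  simp [insertMax]

lemma insertMax_apply_succAbove {n : ℕ} (σ : Equiv.Perm (Fin n)) (p : Fin (n + 1)) (j : Fin n) :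
    insertMax σ p (p.succAbove j) = (σ j).castSucc := by
  simp [insertMax]

lemma bijective_insertMax (n : ℕ) :
    Function.Bijective fun sp : Equiv.Perm (Fin n) × Fin (n + 1) => insertMax sp.1 sp.2 := by
  refine (Fintype.bijective_iff_injective_and_card _).mpr ⟨fun ⟨σ, p⟩ ⟨τ, q⟩ h => ?_, by
    simp [Fintype.card_perm, Nat.factorial_succ, mul_comm]⟩
  simp only at h
  obtain rfl : p = q := by
    by_contra hpq
    obtain ⟨j, hj⟩ := Fin.exists_succAbove_eq hpq
    have hlast := insertMax_apply_self σ p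
    rw [h, ← hj, insertMax_apply_succAbove] at hlast
    exact Fin.castSucc_ne_last _ hlast
  obtain rfl : σ = τ := Equiv.ext fun j => by
    simpa [insertMax_apply_succAbove] using congrArg (· (p.succAbove j)) h
  rfl

lemma permVal_insertMax_of_lt {n : ℕ} (σ : Equiv.Perm (Fin n)) (p : Fin (n + 1)) {i : ℕ}
    (hi : i < p) : permVal (insertMax σ p) i = permVal σ i := by
  have hin : i < n := by omega
  have hpos : (⟨i, by omega⟩ : Fin (n + 1)) = p.succAbove ⟨i, hin⟩ := by
    rw [Fin.succAbove_of_castSucc_lt _ _ (by simpa [Fin.lt_def] using hi)]; rfl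
  simp [permVal, hin, show i < n + 1 by omega, hpos, insertMax_apply_succAbove]

lemma permVal_insertMax_self {n : ℕ} (σ : Equiv.Perm (Fin n)) (p : Fin (n + 1)) :
    permVal (insertMax σ p) p = n := by
  simp [permVal, p.isLt, insertMax_apply_self]

lemma permVal_insertMax_of_gt {n : ℕ} (σ : Equiv.Perm (Fin n)) (p : Fin (n + 1)) {i : ℕ}
    (hi : p < i) (hin : i ≤ n) : permVal (insertMax σ p) i = permVal σ (i - 1) := by
  have hpos : (⟨i, by omega⟩ : Fin (n + 1)) = p.succAbove ⟨i - 1, by omega⟩ := by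
    rw [Fin.succAbove_of_le_castSucc _ _ (by simp [Fin.le_def]; omega)]
    ext; simp; omega
  simp [permVal, show i < n + 1 by omega, show i - 1 < n by omega, hpos,
    insertMax_apply_succAbove]

lemma ascentWord_insertMax {n : ℕ} (hn : 0 < n) (σ : Equiv.Perm (Fin n)) (p : Fin (n + 1)) :
    ascentWord (n + 1) (insertMax σ p) = insertMaxWord (ascentWord n σ) p := by
  have hp := p.isLt
  refine List.ext_getElem (by simp [length_ascentWord, length_insertMaxWord]; omega)
    fun i hi _ => ?_
  simp only [length_ascentWord, Nat.add_sub_cancel] at hi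
  rw [getElem_ascentWord _ _ (by omega),
    getElem_insertMaxWord _ (by rw [length_ascentWord]; omega) (by rw [length_ascentWord]; omega)]
  rcases lt_trichotomy (i + 1) p with hlt | heq | hgt
  · rw [dif_pos hlt, getElem_ascentWord _ _ (by omega), permVal_insertMax_of_lt _ _ hlt,
      permVal_insertMax_of_lt _ _ (by omega)]
  · have := permVal_lt σ (i := i) (by omega)
    rw [dif_neg (by omega), dif_pos heq, permVal_insertMax_of_lt _ _ (by omega), heq,
      permVal_insertMax_self]
    simpa
  · rcases (show i = p ∨ p < i by omega) with rfl | hgt'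
    · have := permVal_lt σ (i := p) (by omega)
      rw [dif_neg (by omega), dif_neg (by omega), dif_pos rfl, permVal_insertMax_self,
        permVal_insertMax_of_gt _ _ (by omega) (by omega), Nat.add_sub_cancel]
      simpa using this.le
    · rw [dif_neg (by omega), dif_neg (by omega), dif_neg (by omega),
        getElem_ascentWord _ _ (by omega), permVal_insertMax_of_gt _ _ hgt' (by omega),
        permVal_insertMax_of_gt _ _ (by omega) (by omega), Nat.add_sub_cancel,
        Nat.sub_add_cancel (by omega)]

lemma sum_pow_runs_insertMax {R : Type*} [CommRing R] (x : R) {n : ℕ} (hn : 2 ≤ n)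
    (σ : Equiv.Perm (Fin n)) :
    ∑ p, x ^ runs (n + 1) (insertMax σ p) =
      (runs n σ : R) * x ^ runs n σ + 2 * x ^ (runs n σ + 1)
        + (n - 1 - runs n σ : R) * x ^ (runs n σ + 2) := by
  obtain ⟨a, B, hword⟩ : ∃ a B, ascentWord n σ = a :: B :=
    List.exists_cons_of_ne_nil (by simp [← List.length_pos_iff, length_ascentWord]; omega)
  have hB : B.length + 2 = n := by
    have := length_ascentWord n σ; rw [hword] at this; simp at this; omega
  simp only [runs_eq_one_add_turns (by omega : 2 ≤ n + 1), runs_eq_one_add_turns hn,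
    ascentWord_insertMax (by omega : 0 < n), hword, pow_add, pow_one, ← mul_sum]
  rw [Fin.sum_univ_eq_sum_range (fun p => x ^ turns (insertMaxWord (a :: B) p)), ← hB,
    sum_pow_turns_insertMaxWord]
  push_cast
  ring

lemma runs_lt {n : ℕ} (hn : 0 < n) (π : Equiv.Perm (Fin n)) : runs n π < n := by
  unfold runs
  split_ifs
  · exact hn
  · have := card_filter_le (Ico 1 (n - 1)) fun i =>
      (permVal π (i - 1) < permVal π i ∧ permVal π (i + 1) < permVal π i) ∨
      (permVal π i < permVal π (i - 1) ∧ permVal π i < permVal π (i + 1))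
    rw [Nat.card_Ico] at this
    omega

lemma Rpoly_eq_sum {n : ℕ} (hn : 0 < n) :
    Rpoly n = ∑ π : Equiv.Perm (Fin n), X ^ runs n π := by
  rw [← sum_fiberwise_of_maps_to (t := range n) fun π _ => mem_range.mpr (runs_lt hn π)]
  refine sum_congr rfl fun k _ => ?_
  rw [sum_congr rfl fun π hπ => by rw [(mem_filter.mp hπ).2], sum_const, nsmul_eq_mul, R,
    ← C_eq_natCast]

lemma Rpoly_two : Rpoly 2 = 2 * X := by
  have hruns : ∀ π : Equiv.Perm (Fin 2), runs 2 π = 1 := fun π => by simp [runs]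
  simp [Rpoly_eq_sum, hruns, Fintype.card_perm]

lemma Rpoly_succ {n : ℕ} (hn : 2 ≤ n) :
    Rpoly (n + 1) =
      X * (2 + ((n : ℝ[X]) - 1) * X) * Rpoly n + X * (1 - X ^ 2) * derivative (Rpoly n) := by
  rw [Rpoly_eq_sum (by omega), Rpoly_eq_sum (by omega), derivative_sum, mul_sum, mul_sum,
    ← sum_add_distrib, ← (bijective_insertMax n).sum_comp, Fintype.sum_prod_type]
  refine sum_congr rfl fun σ _ => ?_
  rw [sum_pow_runs_insertMax X hn]
  obtain ⟨s, hs⟩ : ∃ s, runs n σ = s + 1 :=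
    ⟨runs n σ - 1, by rw [runs]; split_ifs <;> omega⟩
  simp only [hs, derivative_X_pow, C_eq_natCast]
  push_cast
  ring

noncomputable def sqrtRatio (x : ℝ) : ℝ := √((x + 1) / (x - 1))

lemma sqrtRatio_pos {x : ℝ} (hx : 1 < x) : 0 < sqrtRatio x :=
  Real.sqrt_pos.mpr (div_pos (by linarith) (by linarith))

lemma sqrtRatio_sq_mul {x : ℝ} (hx : 1 < x) : sqrtRatio x ^ 2 * (x - 1) = x + 1 := by
  rw [sqrtRatio, Real.sq_sqrt (div_pos (by linarith) (by linarith)).le]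
  field_simp [show x - 1 ≠ 0 by linarith]

lemma hasDerivAt_sqrtRatio {x : ℝ} (hx : 1 < x) :
    HasDerivAt sqrtRatio (-1 / (sqrtRatio x * (x - 1) ^ 2)) x := by
  have hx₁ : x - 1 ≠ 0 := by linarith
  have hquot : HasDerivAt (fun y => (y + 1) / (y - 1)) (-2 / (x - 1) ^ 2) x := by
    refine (((hasDerivAt_id' x).add_const 1).div ((hasDerivAt_id' x).sub_const 1) hx₁).congr_deriv
      (by ring)
  refine (hquot.sqrt (div_pos (by linarith) (by linarith)).ne').congr_deriv ?_
  rw [← sqrtRatio]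
  field_simp [(sqrtRatio_pos hx).ne']

lemma Rpoly_eval_mul_sqrtRatio_pow (m : ℕ) {x : ℝ} (hx : 1 < x) :
    (Rpoly (m + 2)).eval x * sqrtRatio x ^ (m + 3) =
      ((x + 1) / 2) ^ (m + 1) * (P (m + 2)).eval (sqrtRatio x) := by
  induction m generalizing x with
  | zero =>
    have hrel := sqrtRatio_sq_mul hx
    have hP : P 2 = (1 + X ^ 2) * (2 * X) := by simp [P]; norm_num
    simp only [zero_add, Rpoly_two, hP, eval_mul, eval_add, eval_pow, eval_X, eval_one, eval_ofNat]
    linear_combination sqrtRatio x * hrel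
  | succ m ih =>
    have hrel := sqrtRatio_sq_mul hx
    have ht := (sqrtRatio_pos hx).ne'
    have hx₁ : x - 1 ≠ 0 := by linarith
    have hL := (Polynomial.hasDerivAt (Rpoly (m + 2)) x).mul
      ((hasDerivAt_sqrtRatio hx).pow (m + 3))
    have hR := ((((hasDerivAt_id x).add_const 1).div_const 2).pow (m + 1)).mul
      ((Polynomial.hasDerivAt (P (m + 2)) _).comp x (hasDerivAt_sqrtRatio hx))
    have hderiv := hL.unique (hR.congr_of_eventuallyEq <|
      (eventually_gt_nhds hx).mono fun y hy => by simpa using ih hy)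
    have ih := ih hx
    rw [Rpoly_succ (by omega), show P (m + 1 + 2) = (1 + X ^ 2) * derivative (P (m + 2)) from rfl]
    simp only [eval_add, eval_mul, eval_sub, eval_pow, eval_X, eval_one, eval_ofNat, eval_natCast]
    simp only [Pi.pow_apply, Function.comp_apply, id, Nat.add_sub_cancel] at hderiv
    generalize sqrtRatio x = t at *
    generalize (Rpoly (m + 2)).eval x = R₀ at *
    generalize (derivative (Rpoly (m + 2))).eval x = R₁ at *
    generalize (P (m + 2)).eval t = p₀ at *
    generalize (derivative (P (m + 2))).eval t = p₁ at *
    have hderiv' : R₁ * t ^ (m + 4) * (x - 1) ^ 2 - (m + 3) * R₀ * t ^ (m + 2) =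
        (m + 1) / 2 * ((x + 1) / 2) ^ m * p₀ * t * (x - 1) ^ 2
          - ((x + 1) / 2) ^ (m + 1) * p₁ := by
      field_simp at hderiv
      push_cast at hderiv
      linear_combination hderiv / 2
    push_cast
    linear_combination (-((x + 1) / 2) * (1 + t ^ 2)) * hderiv'
      + ((1 + t ^ 2) * (m + 1) / 2 * t * (x - 1) ^ 2) * ih
      + t ^ (m + 2) * (R₁ * (x ^ 2 - 1) / 2 * t ^ 2
          + R₀ * ((m + 3) / 2 - (m + 1) * (x - 1) / 2 * t ^ 2)) * hrel

lemma rpow_half_eq_inv_sqrtRatio_pow {x : ℝ} (hx : 1 < x) (k : ℕ) :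
    ((x - 1) / (x + 1)) ^ ((k : ℝ) / 2) = (sqrtRatio x ^ k)⁻¹ := by
  have hu : 0 ≤ (x + 1) / (x - 1) := (div_pos (by linarith) (by linarith)).le
  rw [← inv_div, Real.inv_rpow hu, sqrtRatio, Real.sqrt_eq_rpow, ← Real.rpow_natCast,
    ← Real.rpow_mul hu, one_div_mul_eq_div]

/-- For `n ≥ 2` and real `x > 1`,
`R_n(x) = ((x+1)/2)^{n-1} ((x-1)/(x+1))^{(n+1)/2} P_n(√((x+1)/(x-1)))`. -/
theorem Rpoly_eq_P (n : ℕ) (hn : 2 ≤ n) (x : ℝ) (hx : 1 < x) :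
    (Rpoly n).eval x =
      ((x + 1) / 2) ^ (n - 1) *
        Real.rpow ((x - 1) / (x + 1)) (((n : ℝ) + 1) / 2) *
        (P n).eval (Real.sqrt ((x + 1) / (x - 1))) := by
  obtain ⟨m, rfl⟩ : ∃ m, n = m + 2 := ⟨n - 2, by omega⟩
  have hpow := rpow_half_eq_inv_sqrtRatio_pow hx (m + 3)
  push_cast at hpow
  rw [Real.rpow_eq_pow, show (m + 2 : ℕ) + (1 : ℝ) = m + 3 by push_cast; ring, hpow,
    ← sqrtRatio, show m + 2 - 1 = m + 1 by omega, mul_right_comm,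
    ← Rpoly_eval_mul_sqrtRatio_pow m hx,
    mul_inv_cancel_right₀ (pow_ne_zero _ (sqrtRatio_pos hx).ne')]
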